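/- arXiv:2410.00560 — 7 statements merged into one kernel-verified Lean document; each statement's English description precedes it below -/
import Mathlib

section
/- Let F be a field, V a 5-dimensional F-vector space, and μ : V × V × V → F an alternating trilinear form. Then there exist a basis e₁, ..., e₅ of V and scalars r, s ∈ F such that μ(e₁, e₂, e₃) = r, μ(e₁, e₄, e₅) = s, and μ(e_i, e_j, e_k) = 0 for every other triple i < j < k; that is, μ is equivalent under GL(V) to r·e₁* ∧ e₂* ∧ e₃* + s·e₁* ∧ e₄* ∧ e₅*. -/
/-!
Choose `u₀, u₁, u₂` with `μ(u₀, u₁, u₂) ≠ 0`. The vectors `y` with `μ(uᵢ, uⱼ, y) = 0` for all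
`i, j` form the common kernel of three functionals, so in dimension 5 they contain independent
`w₀, w₁`. Applying `μ(u₁, u₂, ·)` and its cyclic variants to a linear relation shows that
`u₀, u₁, u₂, w₀, w₁` is a basis, in which the only values of `μ` besides `μ(u₀, u₁, u₂)` are
`aᵢ = μ(uᵢ, w₀, w₁)`. After permuting the `uᵢ` so that `a₀ ≠ 0` unless all `aᵢ` vanish,
replacing `uᵢ` by `uᵢ - (aᵢ / a₀) u₀` for `i = 1, 2` kills `a₁` and `a₂`.
-/

open Module

namespace AlternatingMap

variable {R M N : Type*} [CommRing R] [AddCommGroup M] [Module R M] [AddCommGroup N] [Module R N]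
  (f : M [⋀^Fin 3]→ₗ[R] N)

noncomputable def curry₃ : M →ₗ[R] M →ₗ[R] M →ₗ[R] N :=
  (curryLeftLinearMap ∘ₗ f.curryLeft).compr₂
    ((MultilinearMap.ofSubsingletonₗ R R M N (0 : Fin 1)).symm.toLinearMap ∘ₗ toMultilinearMapLM)

theorem curry₃_apply (a b c : M) : f.curry₃ a b c = f ![a, b, c] :=
  congrArg f (by ext i; fin_cases i <;> rfl)

theorem map_eq_curry₃ (v : Fin 3 → M) : f v = f.curry₃ (v 0) (v 1) (v 2) :=
  congrArg f (by ext i; fin_cases i <;> rfl)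

@[simp]
theorem curry₃_self₁₂ (a c : M) : f.curry₃ a a c = 0 := by
  rw [curry₃_apply]; exact f.map_eq_zero_of_eq _ (i := 0) (j := 1) rfl (by decide)

@[simp]
theorem curry₃_self₁₃ (a b : M) : f.curry₃ a b a = 0 := by
  rw [curry₃_apply]; exact f.map_eq_zero_of_eq _ (i := 0) (j := 2) rfl (by decide)

@[simp]
theorem curry₃_self₂₃ (a b : M) : f.curry₃ a b b = 0 := by
  rw [curry₃_apply]; exact f.map_eq_zero_of_eq _ (i := 1) (j := 2) rfl (by decide)

theorem curry₃_swap₁₂ (a b c : M) : f.curry₃ b a c = -f.curry₃ a b c := by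
  have h := f.curry₃_self₁₂ (a + b) c
  simp only [map_add, LinearMap.add_apply, curry₃_self₁₂, zero_add, add_zero] at h
  exact eq_neg_of_add_eq_zero_left h

theorem curry₃_swap₂₃ (a b c : M) : f.curry₃ a c b = -f.curry₃ a b c := by
  have h := f.curry₃_self₂₃ a (b + c)
  simp only [map_add, LinearMap.add_apply, curry₃_self₂₃, zero_add, add_zero] at h
  exact eq_neg_of_add_eq_zero_left h

theorem curry₃_rotate (a b c : M) : f.curry₃ b c a = f.curry₃ a b c := by
  rw [curry₃_swap₂₃ f b a c, curry₃_swap₁₂, neg_neg]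

section NormalForm

variable {F V : Type*} [Field F] [AddCommGroup V] [Module F V] (μ : V [⋀^Fin 3]→ₗ[F] F)

theorem exists_linearIndependent_curry₃_eq_zero [FiniteDimensional F V] (hV : 5 ≤ finrank F V)
    (u : Fin 3 → V) :
    ∃ w : Fin 2 → V, LinearIndependent F w ∧ ∀ i j k, μ.curry₃ (u i) (u j) (w k) = 0 := by
  let φ : V →ₗ[F] Fin 3 → F :=
    LinearMap.pi ![μ.curry₃ (u 1) (u 2), μ.curry₃ (u 2) (u 0), μ.curry₃ (u 0) (u 1)]
  have hK : 2 ≤ finrank F (LinearMap.ker φ) := by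
    have := φ.finrank_range_add_finrank_ker
    have := (LinearMap.range φ).finrank_le
    rw [finrank_fin_fun] at this
    omega
  obtain ⟨w, hw⟩ := exists_linearIndependent_of_le_finrank hK
  refine ⟨_, hw.map' _ (LinearMap.ker φ).ker_subtype, fun i j k => ?_⟩
  have hφ : φ (w k) = 0 := (w k).2
  have h₀ : μ.curry₃ (u 1) (u 2) (w k) = 0 := congrFun hφ 0
  have h₁ : μ.curry₃ (u 2) (u 0) (w k) = 0 := congrFun hφ 1
  have h₂ : μ.curry₃ (u 0) (u 1) (w k) = 0 := congrFun hφ 2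
  fin_cases i <;> fin_cases j <;>
    simp [h₀, h₁, h₂, μ.curry₃_swap₁₂ (u 0) (u 1), μ.curry₃_swap₁₂ (u 2) (u 0),
      μ.curry₃_swap₁₂ (u 1) (u 2)]

theorem linearIndependent_of_curry₃_eq_zero {u : Fin 3 → V} {w : Fin 2 → V} (hu : μ u ≠ 0)
    (hw : LinearIndependent F w) (huw : ∀ i j k, μ.curry₃ (u i) (u j) (w k) = 0) :
    LinearIndependent F ![u 0, u 1, u 2, w 0, w 1] := by
  rw [Fintype.linearIndependent_iff]
  intro g hg
  simp only [Fin.sum_univ_five, Matrix.cons_val_zero, Matrix.cons_val_one, Matrix.cons_val] at hg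
  have hu' : μ.curry₃ (u 0) (u 1) (u 2) ≠ 0 := by rwa [← μ.map_eq_curry₃]
  have hrot₁ := μ.curry₃_rotate (u 0) (u 1) (u 2)
  have hrot₂ := μ.curry₃_rotate (u 1) (u 2) (u 0)
  have hg₀ : g 0 = 0 := by
    simpa [huw, hrot₁, hu'] using congrArg (μ.curry₃ (u 1) (u 2)) hg
  have hg₁ : g 1 = 0 := by
    simpa [huw, hrot₁, hrot₂, hu'] using congrArg (μ.curry₃ (u 2) (u 0)) hg
  have hg₂ : g 2 = 0 := by
    simpa [huw, hu'] using congrArg (μ.curry₃ (u 0) (u 1)) hg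
  have hw' := Fintype.linearIndependent_iff.mp hw ![g 3, g 4]
    (by simpa [Fin.sum_univ_two, hg₀, hg₁, hg₂] using hg)
  intro i
  fin_cases i
  exacts [hg₀, hg₁, hg₂, hw' 0, hw' 1]

theorem exists_curry₃_pair_eq_zero {u : Fin 3 → V} {w : Fin 2 → V} (hu : μ u ≠ 0)
    (huw : ∀ i j k, μ.curry₃ (u i) (u j) (w k) = 0) :
    ∃ u' : Fin 3 → V, μ u' ≠ 0 ∧ (∀ i j k, μ.curry₃ (u' i) (u' j) (w k) = 0) ∧
      μ.curry₃ (u' 1) (w 0) (w 1) = 0 ∧ μ.curry₃ (u' 2) (w 0) (w 1) = 0 := by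
  obtain ⟨u, hu, huw, hpivot⟩ : ∃ u' : Fin 3 → V, μ u' ≠ 0 ∧
      (∀ i j k, μ.curry₃ (u' i) (u' j) (w k) = 0) ∧
      (μ.curry₃ (u' 0) (w 0) (w 1) = 0 → ∀ i, μ.curry₃ (u' i) (w 0) (w 1) = 0) := by
    by_cases h : ∀ i, μ.curry₃ (u i) (w 0) (w 1) = 0
    · exact ⟨u, hu, huw, fun _ => h⟩
    obtain ⟨i, hi⟩ := not_forall.mp h
    refine ⟨u ∘ Equiv.swap 0 i, ?_, fun _ _ _ => huw _ _ _, fun h₀ => absurd ?_ hi⟩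
    · rw [μ.map_perm]
      exact (smul_ne_zero_iff_ne _).mpr hu
    · simpa using h₀
  let a (i : Fin 3) : F := μ.curry₃ (u i) (w 0) (w 1)
  -- if `a 0 = 0` then every `a i` vanishes, so the junk value `a i / 0 = 0` does no harm
  have hpivot' (i : Fin 3) : a i - a i / a 0 * a 0 = 0 := by
    rcases eq_or_ne (a 0) 0 with h | h
    · rw [show a i = 0 from hpivot h i, zero_div, zero_mul, sub_zero]
    · rw [div_mul_cancel₀ _ h, sub_self]
  refine ⟨![u 0, u 1 - (a 1 / a 0) • u 0, u 2 - (a 2 / a 0) • u 0], ?_, ?_, ?_, ?_⟩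
  · rw [μ.map_eq_curry₃] at hu ⊢
    simpa using hu
  · intro i j k
    fin_cases i <;> fin_cases j <;> simp [huw]
  · simpa using hpivot' 1
  · simpa using hpivot' 2

theorem exists_basis_normalForm (hdim : finrank F V = 5)
    {u : Fin 3 → V} {w : Fin 2 → V} (hu : μ u ≠ 0) (hw : LinearIndependent F w)
    (huw : ∀ i j k, μ.curry₃ (u i) (u j) (w k) = 0)
    (hu₁ : μ.curry₃ (u 1) (w 0) (w 1) = 0) (hu₂ : μ.curry₃ (u 2) (w 0) (w 1) = 0) :
    ∃ e : Basis (Fin 5) F V, ∀ i j k : Fin 5, i < j → j < k →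
      (i, j, k) ≠ (0, 1, 2) → (i, j, k) ≠ (0, 3, 4) → μ ![e i, e j, e k] = 0 := by
  have hv := linearIndependent_of_curry₃_eq_zero μ hu hw huw
  refine ⟨basisOfLinearIndependentOfCardEqFinrank hv (by simp [hdim]),
    fun i j k hij hjk h₀ h₁ => ?_⟩
  rw [coe_basisOfLinearIndependentOfCardEqFinrank, ← curry₃_apply]
  fin_cases i <;> fin_cases j <;> fin_cases k <;> simp [huw, hu₁, hu₂] at hij hjk h₀ h₁ ⊢

end NormalForm

end AlternatingMap

/-- Let `F` be a field, `V` a 5-dimensional `F`-vector space, and `μ` an alternating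
trilinear form on `V`.  Then there are a basis `e₁, …, e₅` of `V` and scalars
`r, s ∈ F` with `μ(e₁,e₂,e₃) = r`, `μ(e₁,e₄,e₅) = s`, and `μ(eᵢ,eⱼ,e_k) = 0` for every
other triple `i < j < k`; that is, `μ` is equivalent under `GL(V)` to
`r·e₁* ∧ e₂* ∧ e₃* + s·e₁* ∧ e₄* ∧ e₅*`. -/
theorem stmt4 (F V : Type*) [Field F] [AddCommGroup V] [Module F V]
    [FiniteDimensional F V] (hdim : Module.finrank F V = 5)
    (μ : V [⋀^Fin 3]→ₗ[F] F) :
    ∃ (e : Module.Basis (Fin 5) F V) (r s : F),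
      μ ![e 0, e 1, e 2] = r ∧ μ ![e 0, e 3, e 4] = s ∧
      ∀ i j k : Fin 5, i < j → j < k →
        (i, j, k) ≠ ((0 : Fin 5), (1 : Fin 5), (2 : Fin 5)) →
        (i, j, k) ≠ ((0 : Fin 5), (3 : Fin 5), (4 : Fin 5)) →
        μ ![e i, e j, e k] = 0 := by
  suffices ∃ e : Basis (Fin 5) F V, ∀ i j k : Fin 5, i < j → j < k →
      (i, j, k) ≠ (0, 1, 2) → (i, j, k) ≠ (0, 3, 4) → μ ![e i, e j, e k] = 0 by
    obtain ⟨e, he⟩ := this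
    exact ⟨e, _, _, rfl, rfl, he⟩
  by_cases hμ : μ = 0
  · exact ⟨finBasisOfFinrankEq F V hdim, by simp [hμ]⟩
  obtain ⟨u, hu⟩ : ∃ u, μ u ≠ 0 := by
    by_contra! h
    exact hμ (AlternatingMap.ext h)
  obtain ⟨w, hw, huw⟩ := μ.exists_linearIndependent_curry₃_eq_zero hdim.ge u
  obtain ⟨u', hu', huw', hu₁, hu₂⟩ := μ.exists_curry₃_pair_eq_zero hu huw
  exact μ.exists_basis_normalForm hdim hu' hw huw' hu₁ hu₂
end

section
/- Let A be a commutative ring in which 2 = 0 and let u, v ∈ A satisfy: u² ≠ 0, v² ≠ 0, u³ = 0, v³ = 0, u²·v = u·v², and suppose that for every nonzero element a of the additive span of {u², u·v, v²} there exists x in the additive span of {u, v} with a·x ≠ 0. Then u²·v ≠ 0 and u² ≠ v². -/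
theorem mul_eq_zero_of_mem_addSubgroupClosure {R : Type*} [NonUnitalNonAssocRing R] {a : R}
    {s : Set R} (h : ∀ y ∈ s, a * y = 0) {x : R} (hx : x ∈ AddSubgroup.closure s) :
    a * x = 0 :=
  (AddSubgroup.closure_le (AddMonoidHom.mulLeft a).ker).mpr h hx

theorem stmt8_general (A : Type*) [CommRing A] (u v : A)
    (hu2 : u ^ 2 ≠ 0) (hu3 : u ^ 3 = 0) (hv3 : v ^ 3 = 0)
    (hns : ∀ a ∈ AddSubgroup.closure ({u ^ 2, u * v, v ^ 2} : Set A), a ≠ 0 →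
      ∃ x ∈ AddSubgroup.closure ({u, v} : Set A), a * x ≠ 0) :
    u ^ 2 * v ≠ 0 ∧ u ^ 2 ≠ v ^ 2 := by
  have hu2v : u ^ 2 * v ≠ 0 := by
    intro h0
    obtain ⟨x, hx, hne⟩ := hns (u ^ 2) (AddSubgroup.subset_closure (by simp)) hu2
    refine hne (mul_eq_zero_of_mem_addSubgroupClosure ?_ hx)
    rintro y (rfl | rfl)
    · rw [← pow_succ, hu3]
    · exact h0
  exact ⟨hu2v, fun h => hu2v (by rw [h, ← pow_succ, hv3])⟩

/-- Let `A` be a commutative ring in which `2 = 0` and let `u, v ∈ A` satisfy: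
`u² ≠ 0`, `v² ≠ 0`, `u³ = 0`, `v³ = 0`, `u²·v = u·v²`, and suppose that for every
nonzero element `a` of the additive span of `{u², u·v, v²}` there exists `x` in the
additive span of `{u, v}` with `a·x ≠ 0`.  Then `u²·v ≠ 0` and `u² ≠ v²`. -/
theorem stmt8 (A : Type*) [CommRing A] (h2 : (2 : A) = 0) (u v : A)
    (hu2 : u ^ 2 ≠ 0) (hv2 : v ^ 2 ≠ 0) (hu3 : u ^ 3 = 0) (hv3 : v ^ 3 = 0)
    (hPW : u ^ 2 * v = u * v ^ 2)
    (hns : ∀ a ∈ AddSubgroup.closure ({u ^ 2, u * v, v ^ 2} : Set A), a ≠ 0 →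
      ∃ x ∈ AddSubgroup.closure ({u, v} : Set A), a * x ≠ 0) :
    u ^ 2 * v ≠ 0 ∧ u ^ 2 ≠ v ^ 2 :=
  stmt8_general A u v hu2 hu3 hv3 hns
end

section
/- For q ≥ 1, let Γ_q be the group with presentation ⟨x, y, z ∣ [x,y] = z^q, xz = zx, yz = zy⟩. Then the centre of Γ_q is the cyclic subgroup generated by (the image of) z, and this subgroup is infinite cyclic (the image of z has infinite order). -/
/-!
`Γ_q` is isomorphic to the integer Heisenberg group `H_q`, with product
`⟨a, b, c⟩ ⟨a', b', c'⟩ = ⟨a + a', b + b', c + c' + q a b'⟩`: the relations hold in `H_q`, and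
conversely `⟨a, b, c⟩ ↦ y ^ b x ^ a z ^ c` is a homomorphism into `Γ_q` because
`x ^ a y ^ b = y ^ b x ^ a z ^ (q a b)` there. An element of `H_q` commuting with `⟨1, 0, 0⟩` and
`⟨0, 1, 0⟩` has `q b = q a = 0`, so for `q ≥ 1` the centre is `{⟨0, 0, c⟩} = ⟨z⟩`, and
`z ^ n = ⟨0, 0, n⟩` is nontrivial for `n ≠ 0`.
-/

/-- The relators of the presentation `⟨x, y, z ∣ [x,y] = z^q, xz = zx, yz = zy⟩`,
as elements of the free group on three generators `x = 0`, `y = 1`, `z = 2`. -/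
def nilRels (q : ℕ) : Set (FreeGroup (Fin 3)) :=
  { FreeGroup.of 0 * FreeGroup.of 1 * (FreeGroup.of 0)⁻¹ * (FreeGroup.of 1)⁻¹ *
      (FreeGroup.of 2 ^ q)⁻¹,
    FreeGroup.of 0 * FreeGroup.of 2 * (FreeGroup.of 0)⁻¹ * (FreeGroup.of 2)⁻¹,
    FreeGroup.of 1 * FreeGroup.of 2 * (FreeGroup.of 1)⁻¹ * (FreeGroup.of 2)⁻¹ }

theorem Subgroup.map_center_mulEquiv {G H : Type*} [Group G] [Group H] (e : G ≃* H) :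
    (center G).map e.toMonoidHom = center H := by
  ext y
  rw [mem_map_equiv, ← SetLike.mem_coe, coe_center, ← MulEquivClass.apply_mem_center_iff e,
    e.apply_symm_apply, ← coe_center, SetLike.mem_coe]

theorem zpow_mul_zpow_of_mul_eq_mul_mul {G : Type*} [Group G] {x y z : G} (hxz : Commute x z)
    (hyz : Commute y z) (h : x * y = y * x * z) (a b : ℤ) :
    x ^ a * y ^ b = y ^ b * x ^ a * z ^ (a * b) := by
  have hx : SemiconjBy y (x * z) x := by
    rw [SemiconjBy, ← mul_assoc, h]
  have hxa : SemiconjBy (x ^ a) y (y * z ^ a) := by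
    have hya := hx.zpow_right a
    rw [SemiconjBy, hxz.mul_zpow] at hya
    rw [SemiconjBy, ← hya, mul_assoc, (hxz.zpow_zpow a a).eq]
  have hyb := hxa.zpow_right b
  rw [SemiconjBy, (hyz.zpow_right a).mul_zpow, ← zpow_mul] at hyb
  rw [hyb, mul_assoc, ← (hxz.zpow_zpow a (a * b)).eq, mul_assoc]

/-- For `q ≠ 0`, `⟨a, b, c⟩` stands for the unitriangular matrix
`[[1, a, c / q], [0, 1, b], [0, 0, 1]]`. -/
@[ext]
structure HeisenbergGroup (q : ℕ) where
  a : ℤ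
  b : ℤ
  c : ℤ

namespace HeisenbergGroup

variable {q : ℕ}

instance : Mul (HeisenbergGroup q) :=
  ⟨fun u v => ⟨u.a + v.a, u.b + v.b, u.c + v.c + q * u.a * v.b⟩⟩
instance : One (HeisenbergGroup q) := ⟨⟨0, 0, 0⟩⟩
instance : Inv (HeisenbergGroup q) := ⟨fun u => ⟨-u.a, -u.b, q * u.a * u.b - u.c⟩⟩

@[simp] lemma mul_def (u v : HeisenbergGroup q) :
    u * v = ⟨u.a + v.a, u.b + v.b, u.c + v.c + q * u.a * v.b⟩ := rfl
@[simp] lemma one_def : (1 : HeisenbergGroup q) = ⟨0, 0, 0⟩ := rfl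
@[simp] lemma inv_def (u : HeisenbergGroup q) : u⁻¹ = ⟨-u.a, -u.b, q * u.a * u.b - u.c⟩ := rfl

instance : Group (HeisenbergGroup q) where
  mul_assoc _ _ _ := by ext <;> simp <;> ring
  one_mul _ := by ext <;> simp
  mul_one _ := by ext <;> simp
  inv_mul_cancel _ := by ext <;> simp

theorem zpow_eq_of_a_mul_b_eq_zero {u : HeisenbergGroup q} (hu : u.a * u.b = 0) (n : ℤ) :
    u ^ n = ⟨n * u.a, n * u.b, n * u.c⟩ := by
  induction n using Int.induction_on with
  | zero => ext <;> simp
  | succ n ih => rw [zpow_add_one, ih]; ext <;> simp <;> grind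
  | pred n ih => rw [zpow_sub_one, ih]; ext <;> simp <;> grind

theorem center_eq_zpowers (hq : q ≠ 0) :
    Subgroup.center (HeisenbergGroup q) = Subgroup.zpowers ⟨0, 0, 1⟩ := by
  apply le_antisymm
  · intro u hu
    have hb : u.b = 0 := by simpa [hq] using congrArg c (Subgroup.mem_center_iff.mp hu ⟨1, 0, 0⟩)
    have ha : u.a = 0 := by simpa [hq] using congrArg c (Subgroup.mem_center_iff.mp hu ⟨0, 1, 0⟩)
    exact ⟨u.c, by ext <;> simp [zpow_eq_of_a_mul_b_eq_zero, ha, hb]⟩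
  · rw [Subgroup.zpowers_le, Subgroup.mem_center_iff]
    intro u
    ext <;> simp [add_comm]

theorem not_isOfFinOrder_mk_zero_zero_one : ¬ IsOfFinOrder (⟨0, 0, 1⟩ : HeisenbergGroup q) := by
  rw [← injective_zpow_iff_not_isOfFinOrder]
  intro m n hmn
  simpa [zpow_eq_of_a_mul_b_eq_zero] using congrArg c hmn

def lift {G : Type*} [Group G] (x y z : G) (hxz : Commute x z) (hyz : Commute y z)
    (h : x * y = y * x * z ^ q) : HeisenbergGroup q →* G where
  toFun u := y ^ u.b * x ^ u.a * z ^ u.c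
  map_one' := by simp
  map_mul' u v := by
    have hxy := zpow_mul_zpow_of_mul_eq_mul_mul (hxz.pow_right q) (hyz.pow_right q) h u.a v.b
    have hzx : Commute ((z ^ q) ^ (u.a * v.b)) (x ^ v.a) :=
      ((hxz.pow_right q).zpow_zpow v.a (u.a * v.b)).symm
    have hzv : Commute (z ^ u.c) (y ^ v.b * x ^ v.a) :=
      ((hyz.zpow_zpow v.b u.c).mul_left (hxz.zpow_zpow v.a u.c)).symm
    calc y ^ (u.b + v.b) * x ^ (u.a + v.a) * z ^ (u.c + v.c + q * u.a * v.b)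
        = y ^ u.b * y ^ v.b * x ^ u.a * ((z ^ q) ^ (u.a * v.b) * x ^ v.a) *
            (z ^ u.c * z ^ v.c) := by
          rw [hzx.eq]; group
      _ = y ^ u.b * (x ^ u.a * y ^ v.b) * x ^ v.a * (z ^ u.c * z ^ v.c) := by
          rw [hxy]; group
      _ = y ^ u.b * x ^ u.a * (z ^ u.c * (y ^ v.b * x ^ v.a)) * z ^ v.c := by
          rw [hzv.eq]; group
      _ = y ^ u.b * x ^ u.a * z ^ u.c * (y ^ v.b * x ^ v.a * z ^ v.c) := by group

end HeisenbergGroup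

section Presentation

variable (q : ℕ)

open PresentedGroup

local notation "Γ" => PresentedGroup (nilRels q)

theorem nilRels_commute_of_zero_of_two : Commute (of 0 : Γ) (of 2) := by
  rw [← commutatorElement_eq_one_iff_commute, commutatorElement_def]
  exact one_of_mem (rels := nilRels q) (by simp [nilRels])

theorem nilRels_commute_of_one_of_two : Commute (of 1 : Γ) (of 2) := by
  rw [← commutatorElement_eq_one_iff_commute, commutatorElement_def]
  exact one_of_mem (rels := nilRels q) (by simp [nilRels])

theorem nilRels_of_zero_mul_of_one : (of 0 : Γ) * of 1 = of 1 * of 0 * of 2 ^ q := by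
  have h : (of 0 : Γ) * of 1 * (of 0)⁻¹ * (of 1)⁻¹ * (of 2 ^ q)⁻¹ = 1 :=
    one_of_mem (rels := nilRels q) (by simp [nilRels])
  rw [mul_inv_eq_one] at h
  have hc : Commute ((of 1 : Γ) * of 0) (of 2 ^ q) :=
    ((nilRels_commute_of_one_of_two q).mul_left (nilRels_commute_of_zero_of_two q)).pow_right q
  calc (of 0 : Γ) * of 1 = of 0 * of 1 * (of 0)⁻¹ * (of 1)⁻¹ * (of 1 * of 0) := by group
    _ = of 1 * of 0 * of 2 ^ q := by rw [h, hc.eq]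

def nilRelsEquiv : PresentedGroup (nilRels q) ≃* HeisenbergGroup q :=
  MonoidHom.toMulEquiv
    (toGroup (f := ![⟨1, 0, 0⟩, ⟨0, 1, 0⟩, ⟨0, 0, 1⟩]) (by
      rintro r (rfl | rfl | rfl) <;> ext <;>
        simp [← zpow_natCast, HeisenbergGroup.zpow_eq_of_a_mul_b_eq_zero]))
    (HeisenbergGroup.lift (of 0) (of 1) (of 2) (nilRels_commute_of_zero_of_two q)
      (nilRels_commute_of_one_of_two q) (nilRels_of_zero_mul_of_one q))
    (PresentedGroup.ext fun i => by fin_cases i <;> simp [HeisenbergGroup.lift])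
    (MonoidHom.ext fun u => by
      ext <;> simp [HeisenbergGroup.lift, HeisenbergGroup.zpow_eq_of_a_mul_b_eq_zero])

theorem nilRelsEquiv_of_two : nilRelsEquiv q (of 2) = ⟨0, 0, 1⟩ := rfl

end Presentation

/-- For `q ≥ 1` and `Γ_q = ⟨x, y, z ∣ [x,y] = z^q, xz = zx, yz = zy⟩`, the centre of
`Γ_q` is the cyclic subgroup generated by the image of `z`, and this subgroup is
infinite cyclic (the image of `z` has infinite order). -/
theorem stmt11 (q : ℕ) (hq : 1 ≤ q) :
    Subgroup.center (PresentedGroup (nilRels q)) =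
      Subgroup.zpowers (PresentedGroup.of (rels := nilRels q) 2) ∧
    ¬ IsOfFinOrder (PresentedGroup.of (rels := nilRels q) 2) := by
  have hz := nilRelsEquiv_of_two q
  constructor
  · apply Subgroup.map_injective (f := (nilRelsEquiv q).toMonoidHom) (nilRelsEquiv q).injective
    rw [Subgroup.map_center_mulEquiv, MonoidHom.map_zpowers, MulEquiv.coe_toMonoidHom, hz]
    exact HeisenbergGroup.center_eq_zpowers (by omega)
  · intro h
    exact HeisenbergGroup.not_isOfFinOrder_mk_zero_zero_one
      (hz ▸ (nilRelsEquiv q).toMonoidHom.isOfFinOrder h)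
end

section
/- For q ≥ 1, let Γ_q be the group with presentation ⟨x, y, z ∣ [x,y] = z^q, xz = zx, yz = zy⟩. Then the commutator subgroup Γ_q′ is the cyclic subgroup generated by (the image of) z^q. -/
/-!
The image of `z` is central, since it commutes with all three generators; hence so is `z ^ q`,
and `⟨z ^ q⟩` is normal. Modulo `⟨z ^ q⟩` the generators commute pairwise (`[x, y] = z ^ q`), so
the quotient is abelian and `Γ_q′ ≤ ⟨z ^ q⟩`. Conversely `z ^ q = [x, y] ∈ Γ_q′`.
-/

open scoped commutatorElement

namespace Subgroup

variable {G : Type*} [Group G]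

theorem commute_of_closure_eq_top {S : Set G} (hS : closure S = ⊤)
    (hcomm : ∀ x ∈ S, ∀ y ∈ S, Commute x y) (a b : G) : Commute a b :=
  have hcc : ∀ g : G, g ∈ S.centralizer.centralizer := fun g ↦
    closure_le_centralizer_centralizer S (hS ▸ mem_top g)
  Set.centralizer_centralizer_comm_of_comm hcomm a (hcc a) b (hcc b)

theorem commutator_le_of_commutatorElement_mem {S : Set G} (hS : closure S = ⊤)
    {N : Subgroup G} [N.Normal] (h : ∀ a ∈ S, ∀ b ∈ S, ⁅a, b⁆ ∈ N) :
    _root_.commutator G ≤ N := by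
  rw [_root_.commutator_def, commutator_le]
  intro g₁ _ g₂ _
  have hS' : closure (QuotientGroup.mk' N '' S) = ⊤ := by
    rw [← MonoidHom.map_closure, hS, map_top_of_surjective _ (QuotientGroup.mk'_surjective N)]
  have hcomm : ∀ x ∈ QuotientGroup.mk' N '' S, ∀ y ∈ QuotientGroup.mk' N '' S, Commute x y := by
    rintro _ ⟨a, ha, rfl⟩ _ ⟨b, hb, rfl⟩
    rw [← commutatorElement_eq_one_iff_commute, ← map_commutatorElement, QuotientGroup.mk'_apply,
      QuotientGroup.eq_one_iff]
    exact h a ha b hb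
  rw [← QuotientGroup.eq_one_iff, ← QuotientGroup.mk'_apply, map_commutatorElement,
    commutatorElement_eq_one_iff_commute]
  exact commute_of_closure_eq_top hS' hcomm _ _

theorem normal_of_le_center {H : Subgroup G} (hH : H ≤ center G) : H.Normal :=
  ⟨fun n hn g ↦ by rwa [mem_center_iff.mp (hH hn) g, mul_inv_cancel_right]⟩

end Subgroup

namespace nilRels

variable (q : ℕ)

theorem commutatorElement_of_zero_of_one :
    ⁅PresentedGroup.of (rels := nilRels q) 0, PresentedGroup.of (rels := nilRels q) 1⁆ =
      PresentedGroup.of 2 ^ q :=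
  mul_inv_eq_one.mp <| PresentedGroup.one_of_mem (Or.inl rfl)

theorem commute_of_zero_of_two :
    Commute (PresentedGroup.of (rels := nilRels q) 0) (PresentedGroup.of 2) :=
  commutatorElement_eq_one_iff_commute.mp <| PresentedGroup.one_of_mem (Or.inr (Or.inl rfl))

theorem commute_of_one_of_two :
    Commute (PresentedGroup.of (rels := nilRels q) 1) (PresentedGroup.of 2) :=
  commutatorElement_eq_one_iff_commute.mp <| PresentedGroup.one_of_mem (Or.inr (Or.inr rfl))

theorem of_two_mem_center : PresentedGroup.of (rels := nilRels q) 2 ∈ Subgroup.center _ := by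
  rw [Subgroup.center_eq_iInf (PresentedGroup.closure_range_of _)]
  simp only [Subgroup.mem_iInf, Set.mem_range, forall_exists_index, forall_apply_eq_imp_iff,
    Subgroup.mem_centralizer_singleton_iff]
  intro i
  fin_cases i
  exacts [(commute_of_zero_of_two q).symm.eq, (commute_of_one_of_two q).symm.eq, rfl]

theorem commutatorElement_of_of_mem_zpowers (i j : Fin 3) :
    ⁅PresentedGroup.of (rels := nilRels q) i, PresentedGroup.of (rels := nilRels q) j⁆ ∈
      Subgroup.zpowers (PresentedGroup.of 2 ^ q) := by
  have hz := Subgroup.mem_center_iff.mp (of_two_mem_center q)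
  have hgz (g : PresentedGroup (nilRels q)) : ⁅g, PresentedGroup.of (2 : Fin 3)⁆ = 1 :=
    commutatorElement_eq_one_iff_commute.mpr (hz g)
  have hzg (g : PresentedGroup (nilRels q)) : ⁅PresentedGroup.of (2 : Fin 3), g⁆ = 1 :=
    commutatorElement_eq_one_iff_commute.mpr (hz g).symm
  have hxy := commutatorElement_of_zero_of_one q
  have hyx : ⁅PresentedGroup.of (rels := nilRels q) 1, PresentedGroup.of (rels := nilRels q) 0⁆ =
      (PresentedGroup.of 2 ^ q)⁻¹ := by
    rw [← commutatorElement_inv, hxy]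
  fin_cases i <;> fin_cases j <;> simp [hgz, hzg, hxy, hyx]

end nilRels

theorem stmt12_general (q : ℕ) :
    commutator (PresentedGroup (nilRels q)) =
      Subgroup.zpowers ((PresentedGroup.of (rels := nilRels q) 2) ^ q) := by
  have hcentral := Subgroup.pow_mem _ (nilRels.of_two_mem_center q) q
  have := Subgroup.normal_of_le_center (Subgroup.zpowers_le.mpr hcentral)
  refine le_antisymm (Subgroup.commutator_le_of_commutatorElement_mem
    (PresentedGroup.closure_range_of _) ?_) ?_
  · rintro _ ⟨i, rfl⟩ _ ⟨j, rfl⟩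
    exact nilRels.commutatorElement_of_of_mem_zpowers q i j
  · rw [Subgroup.zpowers_le, ← nilRels.commutatorElement_of_zero_of_one]
    exact Subgroup.commutator_mem_commutator (Subgroup.mem_top _) (Subgroup.mem_top _)

/-- For `q ≥ 1` and `Γ_q = ⟨x, y, z ∣ [x,y] = z^q, xz = zx, yz = zy⟩`, the commutator
subgroup `Γ_q′` is the cyclic subgroup generated by the image of `z^q`. -/
theorem stmt12 (q : ℕ) (hq : 1 ≤ q) :
    commutator (PresentedGroup (nilRels q)) =
      Subgroup.zpowers ((PresentedGroup.of (rels := nilRels q) 2) ^ q) :=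
  stmt12_general q
end

section
/- For q ≥ 1, let Γ_q be the group with presentation ⟨x, y, z ∣ [x,y] = z^q, xz = zx, yz = zy⟩, and let I(Γ_q) denote the preimage in Γ_q of the torsion subgroup of the abelianization Γ_q^{ab}. Then I(Γ_q) equals the centre of Γ_q, which is the cyclic subgroup generated by (the image of) z. -/
/-- `I(G)`: the preimage in `G` of the torsion subgroup of the abelianization `G^{ab}`. -/
def IGrp (G : Type*) [Group G] : Subgroup G :=
  Subgroup.comap Abelianization.of (CommGroup.torsion (Abelianization G))

/-!
Sending `x, y, z` to `(1,0,0), (0,1,0), (0,0,1)` in the integral Heisenberg group `Heis q` and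
then to the first two coordinates gives `coords : Γ_q → ℤ²`, whose kernel is `⟨z⟩`: modulo the
central element `z` the generators `x` and `y` commute, so `(a, b) ↦ x^a y^b` inverts `coords` on
`Γ_q / ⟨z⟩`. As `ℤ²` is torsion-free, `I(Γ_q) ≤ ker coords`. An element commuting with `x` and `y`
has image `(a, b, c)` in `Heis q` with `q b = q a = 0`, so also `Z(Γ_q) ≤ ker coords`. Conversely
`z` is central, and `z^q = [x, y]` dies in the abelianization, so `z ∈ I(Γ_q)`.
-/

@[ext]
structure Heis (q : ℕ) where
  a : ℤ
  b : ℤ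
  c : ℤ

namespace Heis

variable {q : ℕ}

-- `⟨a, b, c⟩` stands for `x^a y^b z^c`; the correction term in the product comes from
-- `y^b x^a' = x^a' y^b z^(-q a' b)`.
instance : Mul (Heis q) := ⟨fun g h => ⟨g.a + h.a, g.b + h.b, g.c + h.c - q * h.a * g.b⟩⟩

instance : One (Heis q) := ⟨⟨0, 0, 0⟩⟩

instance : Inv (Heis q) := ⟨fun g => ⟨-g.a, -g.b, -g.c - q * g.a * g.b⟩⟩

@[simp] theorem mul_a (g h : Heis q) : (g * h).a = g.a + h.a := rfl
@[simp] theorem mul_b (g h : Heis q) : (g * h).b = g.b + h.b := rfl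
@[simp] theorem mul_c (g h : Heis q) : (g * h).c = g.c + h.c - q * h.a * g.b := rfl
@[simp] theorem one_a : (1 : Heis q).a = 0 := rfl
@[simp] theorem one_b : (1 : Heis q).b = 0 := rfl
@[simp] theorem one_c : (1 : Heis q).c = 0 := rfl
@[simp] theorem inv_a (g : Heis q) : g⁻¹.a = -g.a := rfl
@[simp] theorem inv_b (g : Heis q) : g⁻¹.b = -g.b := rfl
@[simp] theorem inv_c (g : Heis q) : g⁻¹.c = -g.c - q * g.a * g.b := rfl

instance : Group (Heis q) where
  mul_assoc g h k := by ext <;> simp <;> ring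
  one_mul g := by ext <;> simp
  mul_one g := by ext <;> simp
  inv_mul_cancel g := by ext <;> simp; ring

def x : Heis q := ⟨1, 0, 0⟩
def y : Heis q := ⟨0, 1, 0⟩
def z : Heis q := ⟨0, 0, 1⟩

theorem z_pow (n : ℕ) : (z : Heis q) ^ n = ⟨0, 0, n⟩ := by
  induction n with
  | zero => rfl
  | succ n ih => rw [pow_succ, ih]; ext <;> simp [z]

def coords : Heis q →* Multiplicative ℤ × Multiplicative ℤ where
  toFun g := (Multiplicative.ofAdd g.a, Multiplicative.ofAdd g.b)
  map_one' := rfl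
  map_mul' _ _ := rfl

theorem coords_eq_one_of_commute (hq : q ≠ 0) {g : Heis q} (hx : Commute g x)
    (hy : Commute g y) : coords g = 1 := by
  have hb : (q : ℤ) * g.b = 0 := by
    have := congrArg c hx.eq
    simp only [mul_c, x] at this
    linarith
  have ha : (q : ℤ) * g.a = 0 := by
    have := congrArg c hy.eq
    simp only [mul_c, y] at this
    linarith
  simp_all [coords]

end Heis

theorem Subgroup.normal_of_le_center_s13 {G : Type*} [Group G] {H : Subgroup G}
    (hH : H ≤ Subgroup.center G) : H.Normal :=
  ⟨fun n hn g => by rwa [Subgroup.mem_center_iff.mp (hH hn) g, mul_inv_cancel_right]⟩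

theorem IGrp_le_ker {G A : Type*} [Group G] [CommGroup A] [IsMulTorsionFree A] (f : G →* A) :
    IGrp G ≤ f.ker := fun g hg => by
  rw [MonoidHom.mem_ker, ← Abelianization.lift_apply_of f g, ← isOfFinOrder_iff_eq_one]
  exact (Abelianization.lift f).isOfFinOrder hg

theorem mem_IGrp_of_pow_mem_commutator {G : Type*} [Group G] {g : G} {n : ℕ} (hn : n ≠ 0)
    (hg : g ^ n ∈ commutator G) : g ∈ IGrp G :=
  isOfFinOrder_iff_pow_eq_one.mpr
    ⟨n, Nat.pos_of_ne_zero hn, by rwa [← map_pow, ← MonoidHom.mem_ker, Abelianization.ker_of]⟩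

open scoped commutatorElement

namespace nilRels

open PresentedGroup

variable (q : ℕ)

local notation "Γ" => PresentedGroup (nilRels q)

theorem commutatorElement_of_zero_of_one_s13 : ⁅(of 0 : Γ), (of 1 : Γ)⁆ = of 2 ^ q := by
  have h := one_of_mem (rels := nilRels q) (Set.mem_insert _ _)
  simp only [map_mul, map_inv, map_pow] at h
  exact mul_inv_eq_one.mp h

theorem commute_of_zero_of_two_s13 : Commute (of 0 : Γ) (of 2) := by
  have h := one_of_mem (rels := nilRels q) (Set.mem_insert_of_mem _ (Set.mem_insert _ _))
  simp only [map_mul, map_inv] at h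
  exact commutatorElement_eq_one_iff_commute.mp h

theorem commute_of_one_of_two_s13 : Commute (of 1 : Γ) (of 2) := by
  have h := one_of_mem (rels := nilRels q)
    (Set.mem_insert_of_mem _ (Set.mem_insert_of_mem _ (Set.mem_singleton _)))
  simp only [map_mul, map_inv] at h
  exact commutatorElement_eq_one_iff_commute.mp h

theorem of_two_mem_center_s13 : (of 2 : Γ) ∈ Subgroup.center Γ := by
  rw [Subgroup.center_eq_iInf (closure_range_of _)]
  simp only [Subgroup.mem_iInf, Set.forall_mem_range, Subgroup.mem_centralizer_singleton_iff]
  intro i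
  fin_cases i
  exacts [(commute_of_zero_of_two_s13 q).symm, (commute_of_one_of_two_s13 q).symm, rfl]

theorem zpowers_le_IGrp (hq : q ≠ 0) : Subgroup.zpowers (of 2 : Γ) ≤ IGrp Γ := by
  refine Subgroup.zpowers_le.mpr (mem_IGrp_of_pow_mem_commutator hq ?_)
  rw [← commutatorElement_of_zero_of_one_s13]
  exact Subgroup.commutator_mem_commutator (Subgroup.mem_top _) (Subgroup.mem_top _)

noncomputable def toHeis : Γ →* Heis q :=
  toGroup (f := ![Heis.x, Heis.y, Heis.z]) fun r hr => by
    rcases hr with rfl | rfl | rfl <;> ext <;> simp [Heis.z_pow] <;> simp [Heis.x, Heis.y, Heis.z]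

@[simp]
theorem toHeis_of (i : Fin 3) : toHeis q (of i) = ![Heis.x, Heis.y, Heis.z] i :=
  toGroup.of _

noncomputable def coords : Γ →* Multiplicative ℤ × Multiplicative ℤ :=
  Heis.coords.comp (toHeis q)

theorem center_le_ker_coords (hq : q ≠ 0) : Subgroup.center Γ ≤ (coords q).ker := fun g hg => by
  have h (i : Fin 3) : Commute (toHeis q g) (toHeis q (of i)) :=
    ((show Commute (of i : Γ) g from Subgroup.mem_center_iff.mp hg _).map (toHeis q)).symm
  exact Heis.coords_eq_one_of_commute hq (by simpa using h 0) (by simpa using h 1)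

theorem ker_coords_le_zpowers : (coords q).ker ≤ Subgroup.zpowers (of 2 : Γ) := by
  have := Subgroup.normal_of_le_center_s13 (Subgroup.zpowers_le.mpr (of_two_mem_center_s13 q))
  let π := QuotientGroup.mk' (Subgroup.zpowers (of 2 : Γ))
  have hcomm : Commute (π (of 0)) (π (of 1)) := by
    rw [← commutatorElement_eq_one_iff_commute, ← map_commutatorElement,
      commutatorElement_of_zero_of_one_s13, QuotientGroup.mk'_apply, QuotientGroup.eq_one_iff]
    exact Subgroup.npow_mem_zpowers _ _
  let σ := (zpowersHom _ (π (of 0))).noncommCoprod (zpowersHom _ (π (of 1)))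
    fun m n => hcomm.zpow_zpow _ _
  have hσ : σ.comp (coords q) = π := ext fun i => by
    fin_cases i
    · simp [σ, π, coords, Heis.coords, Heis.x, MonoidHom.noncommCoprod_apply]
    · simp [σ, π, coords, Heis.coords, Heis.y, MonoidHom.noncommCoprod_apply]
    · have hz : π (of 2) = 1 := (QuotientGroup.eq_one_iff _).mpr (Subgroup.mem_zpowers _)
      simp [coords, Heis.coords, Heis.z, hz, ← Prod.one_eq_mk]
  intro g hg
  have : π g = 1 := by rw [← hσ, MonoidHom.comp_apply, hg, map_one]
  exact (QuotientGroup.eq_one_iff g).mp this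

end nilRels

/-- For `q ≥ 1` and `Γ_q = ⟨x, y, z ∣ [x,y] = z^q, xz = zx, yz = zy⟩`, the subgroup
`I(Γ_q)` (the preimage of the torsion subgroup of the abelianization) equals the centre
of `Γ_q`, which is the cyclic subgroup generated by the image of `z`. -/
theorem stmt13 (q : ℕ) (hq : 1 ≤ q) :
    IGrp (PresentedGroup (nilRels q)) = Subgroup.center (PresentedGroup (nilRels q)) ∧
    Subgroup.center (PresentedGroup (nilRels q)) =
      Subgroup.zpowers (PresentedGroup.of (rels := nilRels q) 2) := by
  have hq₀ : q ≠ 0 := Nat.one_le_iff_ne_zero.mp hq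
  have hz_center := Subgroup.zpowers_le.mpr (nilRels.of_two_mem_center_s13 q)
  have hI := (IGrp_le_ker (nilRels.coords q)).trans (nilRels.ker_coords_le_zpowers q)
  have hcenter :=
    (nilRels.center_le_ker_coords q hq₀).trans (nilRels.ker_coords_le_zpowers q)
  exact ⟨le_antisymm (hI.trans hz_center) (hcenter.trans (nilRels.zpowers_le_IGrp q hq₀)),
    le_antisymm hcenter hz_center⟩
end

section
/- Let G be the group with presentation ⟨a, b, c, t ∣ a b a⁻¹ = c, t a t⁻¹ = c⁻¹, t b t⁻¹ = c a⁻¹ c⁻¹, a b = 1, t a⁻¹ t a = 1⟩. Then G is isomorphic to ℤ × ℤ/2ℤ. -/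
/-- The relators of the presentation
`⟨a, b, c, t ∣ a b a⁻¹ = c, t a t⁻¹ = c⁻¹, t b t⁻¹ = c a⁻¹ c⁻¹, a b = 1, t a⁻¹ t a = 1⟩`
on the generators `a = 0`, `b = 1`, `c = 2`, `t = 3` of the free group on four letters. -/
def surgRels : Set (FreeGroup (Fin 4)) :=
  letI a : FreeGroup (Fin 4) := FreeGroup.of 0
  letI b : FreeGroup (Fin 4) := FreeGroup.of 1
  letI c : FreeGroup (Fin 4) := FreeGroup.of 2
  letI t : FreeGroup (Fin 4) := FreeGroup.of 3
  { a * b * a⁻¹ * c⁻¹,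
    t * a * t⁻¹ * c,
    t * b * t⁻¹ * (c * a⁻¹ * c⁻¹)⁻¹,
    a * b,
    t * a⁻¹ * t * a }

/-! `a b = 1` and `a b a⁻¹ = c` give `b = c = a⁻¹`; then `t a t⁻¹ = c⁻¹` says that `t` commutes
with `a`, and `t a⁻¹ t a = 1` becomes `t² = 1`. So `(n, k) ↦ aⁿ tᵏ` is a homomorphism from
`ℤ × ℤ/2` onto the group, and it is inverted by `a ↦ (1, 0)`, `b, c ↦ (-1, 0)`, `t ↦ (0, 1)`,
which respects the relators. -/

section

variable {G : Type*} [Group G] {x y : G} {n : ℕ} [NeZero n]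

def Commute.intProdZModHom (hxy : Commute x y) (hy : y ^ n = 1) :
    Multiplicative (ℤ × ZMod n) →* G where
  toFun p := x ^ p.toAdd.1 * y ^ p.toAdd.2.val
  map_one' := by simp
  map_mul' p q := by
    have hyx : Commute (y ^ p.toAdd.2.val) (x ^ q.toAdd.1) := (hxy.symm.pow_left _).zpow_right _
    have hval : y ^ (p.toAdd.2 + q.toAdd.2).val = y ^ p.toAdd.2.val * y ^ q.toAdd.2.val := by
      rw [← pow_add, ZMod.val_add, ← pow_eq_pow_mod _ hy]
    simp only [toAdd_mul, Prod.fst_add, Prod.snd_add, zpow_add, hval, hyx.mul_mul_mul_comm]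

@[simp]
theorem Commute.intProdZModHom_apply (hxy : Commute x y) (hy : y ^ n = 1)
    (p : Multiplicative (ℤ × ZMod n)) :
    hxy.intProdZModHom hy p = x ^ p.toAdd.1 * y ^ p.toAdd.2.val :=
  rfl

end

namespace SurgeryPresentation

abbrev a : PresentedGroup surgRels := .of 0
abbrev b : PresentedGroup surgRels := .of 1
abbrev c : PresentedGroup surgRels := .of 2
abbrev t : PresentedGroup surgRels := .of 3

theorem a_mul_b : a * b = 1 :=
  PresentedGroup.one_of_mem (by simp [surgRels])

theorem a_mul_b_mul_a_inv_mul_c_inv : a * b * a⁻¹ * c⁻¹ = 1 :=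
  PresentedGroup.one_of_mem (by simp [surgRels])

theorem t_mul_a_mul_t_inv_mul_c : t * a * t⁻¹ * c = 1 :=
  PresentedGroup.one_of_mem (by simp [surgRels])

theorem t_mul_a_inv_mul_t_mul_a : t * a⁻¹ * t * a = 1 :=
  PresentedGroup.one_of_mem (by simp [surgRels])

theorem b_eq : b = a⁻¹ :=
  (inv_eq_of_mul_eq_one_right a_mul_b).symm

theorem c_eq : c = a⁻¹ := by
  have h := a_mul_b_mul_a_inv_mul_c_inv
  rwa [b_eq, mul_inv_cancel, one_mul, ← mul_inv_rev, inv_eq_one, mul_eq_one_iff_eq_inv] at h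

theorem commute_a_t : Commute a t := by
  have h := t_mul_a_mul_t_inv_mul_c
  rw [c_eq, mul_inv_eq_one, mul_inv_eq_iff_eq_mul] at h
  exact h.symm

theorem t_sq : t ^ 2 = 1 :=
  calc t ^ 2 = a * (a⁻¹ * t * t * a) * a⁻¹ := by rw [sq]; group
    _ = a * (t * a⁻¹ * t * a) * a⁻¹ := by rw [commute_a_t.inv_left.eq]
    _ = 1 := by rw [t_mul_a_inv_mul_t_mul_a]; group

def toIntProdZMod : PresentedGroup surgRels →* Multiplicative (ℤ × ZMod 2) :=
  PresentedGroup.toGroup (f := ![.ofAdd (1, 0), .ofAdd (-1, 0), .ofAdd (-1, 0), .ofAdd (0, 1)]) <| by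
    simp only [surgRels, Set.mem_insert_iff, Set.mem_singleton_iff]
    rintro r (rfl | rfl | rfl | rfl | rfl) <;> decide

def ofIntProdZMod : Multiplicative (ℤ × ZMod 2) →* PresentedGroup surgRels :=
  commute_a_t.intProdZModHom t_sq

theorem ofIntProdZMod_comp_toIntProdZMod :
    ofIntProdZMod.comp toIntProdZMod = MonoidHom.id _ := by
  refine PresentedGroup.ext fun i => ?_
  fin_cases i <;> simp [ofIntProdZMod, toIntProdZMod, b_eq, c_eq, ZMod.val_one]

theorem toIntProdZMod_comp_ofIntProdZMod :
    toIntProdZMod.comp ofIntProdZMod = MonoidHom.id _ := by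
  ext p <;> simp [ofIntProdZMod, toIntProdZMod]

end SurgeryPresentation

/-- The group
`G = ⟨a, b, c, t ∣ a b a⁻¹ = c, t a t⁻¹ = c⁻¹, t b t⁻¹ = c a⁻¹ c⁻¹, a b = 1, t a⁻¹ t a = 1⟩`
is isomorphic to `ℤ × ℤ/2ℤ`. -/
theorem stmt16 :
    Nonempty (PresentedGroup surgRels ≃* Multiplicative (ℤ × ZMod 2)) :=
  ⟨SurgeryPresentation.toIntProdZMod.toMulEquiv SurgeryPresentation.ofIntProdZMod
    SurgeryPresentation.ofIntProdZMod_comp_toIntProdZMod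
    SurgeryPresentation.toIntProdZMod_comp_ofIntProdZMod⟩
end

section
/- Let G be the group with presentation ⟨a, b, c, d, q, t ∣ a q a⁻¹ = c q c⁻¹, q a q⁻¹ = b, q c q⁻¹ = d, t a t⁻¹ = c⁻¹, t b t⁻¹ = c d⁻¹ c⁻¹, a b⁻¹ = 1, a⁻¹ c = 1, q⁻¹ t⁻¹ q t = 1⟩. Then G is isomorphic to ℤ × K, where K = ⟨a, t ∣ t a t⁻¹ = a⁻¹⟩ is the Klein bottle group ℤ ⋊ ℤ (with ℤ acting on ℤ by negation). -/
/-- The relators of the presentation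
`⟨a, b, c, d, q, t ∣ a q a⁻¹ = c q c⁻¹, q a q⁻¹ = b, q c q⁻¹ = d, t a t⁻¹ = c⁻¹,
t b t⁻¹ = c d⁻¹ c⁻¹, a b⁻¹ = 1, a⁻¹ c = 1, q⁻¹ t⁻¹ q t = 1⟩`
on the generators `a = 0`, `b = 1`, `c = 2`, `d = 3`, `q = 4`, `t = 5`. -/
def kbRels : Set (FreeGroup (Fin 6)) :=
  letI a : FreeGroup (Fin 6) := FreeGroup.of 0
  letI b : FreeGroup (Fin 6) := FreeGroup.of 1
  letI c : FreeGroup (Fin 6) := FreeGroup.of 2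
  letI d : FreeGroup (Fin 6) := FreeGroup.of 3
  letI q : FreeGroup (Fin 6) := FreeGroup.of 4
  letI t : FreeGroup (Fin 6) := FreeGroup.of 5
  { a * q * a⁻¹ * (c * q * c⁻¹)⁻¹,
    q * a * q⁻¹ * b⁻¹,
    q * c * q⁻¹ * d⁻¹,
    t * a * t⁻¹ * c,
    t * b * t⁻¹ * (c * d⁻¹ * c⁻¹)⁻¹,
    a * b⁻¹,
    a⁻¹ * c,
    q⁻¹ * t⁻¹ * q * t }

/-- The action of `ℤ` on `ℤ` by negation, written multiplicatively:  the generator of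
the second factor acts on the normal factor by inversion. -/
def negAction : Multiplicative ℤ →* MulAut (Multiplicative ℤ) :=
  zpowersHom (MulAut (Multiplicative ℤ)) (MulEquiv.inv (Multiplicative ℤ))

/-- The Klein bottle group `ℤ ⋊ ℤ`, with the generator of the second factor acting on
`ℤ` by negation; equivalently `⟨a, t ∣ t a t⁻¹ = a⁻¹⟩`. -/
def KleinBottleGroup : Type := Multiplicative ℤ ⋊[negAction] Multiplicative ℤ

instance : Group KleinBottleGroup := by unfold KleinBottleGroup; infer_instance


/-!
The relators `a b⁻¹` and `a⁻¹ c` identify `b` and `c` with `a`; then `q a q⁻¹ = b` says that `q`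
commutes with `a`, and `d = q c q⁻¹ = a`. What remains is `t a t⁻¹ = a⁻¹` and `[q, t] = 1`, so `G`
is generated by the central element `q` and by `a`, `t` subject to the Klein bottle relation.
Mutually inverse homomorphisms send `q` to the generator of `ℤ` and `a, b, c, d` and `t` to the
generators `a` and `t` of the Klein bottle group, and back.
-/

theorem Function.Semiconj.mulAut_zpow {M N : Type*} [Mul M] [Mul N] {f : M → N}
    {σ : MulAut M} {τ : MulAut N} (h : Function.Semiconj f σ τ) (n : ℤ) :
    Function.Semiconj f ⇑(σ ^ n) ⇑(τ ^ n) := by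
  induction n using Int.induction_on with
  | zero => exact Function.Semiconj.id_right
  | succ n ih =>
    rw [zpow_add_one, zpow_add_one, MulAut.coe_mul, MulAut.coe_mul]
    exact ih.comp_right h
  | pred n ih =>
    rw [zpow_sub_one, zpow_sub_one, MulAut.coe_mul, MulAut.coe_mul]
    exact ih.comp_right (h.inverses_right σ.right_inv τ.left_inv)

theorem MonoidHom.prod_ext {M N P : Type*} [MulOneClass M] [MulOneClass N] [MulOneClass P]
    {f g : M × N →* P} (hl : f.comp (MonoidHom.inl M N) = g.comp (MonoidHom.inl M N))
    (hr : f.comp (MonoidHom.inr M N) = g.comp (MonoidHom.inr M N)) : f = g := by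
  ext ⟨m, n⟩
  have hmn : (m, n) = (m, 1) * (1, n) := by simp
  rw [hmn, map_mul, map_mul]
  exact congr_arg₂ (· * ·) (DFunLike.congr_fun hl m) (DFunLike.congr_fun hr n)

namespace KleinBottleGroup

open Multiplicative

def a : KleinBottleGroup := SemidirectProduct.inl (ofAdd 1)

def t : KleinBottleGroup := SemidirectProduct.inr (ofAdd 1)

theorem t_mul_a_mul_t_inv : t * a * t⁻¹ = a⁻¹ :=
  (SemidirectProduct.inl_aut (φ := negAction) (ofAdd 1) (ofAdd 1)).symm

variable {H : Type*} [Group H]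

theorem hom_ext {f g : KleinBottleGroup →* H} (ha : f a = g a) (ht : f t = g t) : f = g :=
  SemidirectProduct.hom_ext (MonoidHom.ext_mint ha) (MonoidHom.ext_mint ht)

def lift (x y : H) (h : y * x * y⁻¹ = x⁻¹) : KleinBottleGroup →* H :=
  SemidirectProduct.lift (zpowersHom H x) (zpowersHom H y) fun n => by
    refine MonoidHom.ext fun m => ?_
    -- `negAction n` is the `n`-th power of inversion, and conjugation by `y ^ n` the `n`-th power
    -- of conjugation by `y`, so the case `n = 1`, which is `h`, suffices.
    have base : Function.Semiconj (zpowersHom H x) (MulEquiv.inv (Multiplicative ℤ))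
        (MulAut.conj y) := fun k => by
      simp only [zpowersHom_apply, MulEquiv.inv_apply, toAdd_inv, zpow_neg, MulAut.conj_apply]
      rw [← conj_zpow, h, inv_zpow]
    simpa [negAction, zpowersHom_apply, map_zpow] using base.mulAut_zpow n.toAdd m

@[simp]
theorem lift_a (x y : H) (h : y * x * y⁻¹ = x⁻¹) : lift x y h a = x :=
  (SemidirectProduct.lift_inl _ _ _ _).trans (by simp)

@[simp]
theorem lift_t (x y : H) (h : y * x * y⁻¹ = x⁻¹) : lift x y h t = y :=
  (SemidirectProduct.lift_inr _ _ _ _).trans (by simp)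

end KleinBottleGroup

namespace kbRels

open Multiplicative PresentedGroup
open scoped commutatorElement

local notation "𝐚" => (PresentedGroup.of 0 : PresentedGroup kbRels)
local notation "𝐛" => (PresentedGroup.of 1 : PresentedGroup kbRels)
local notation "𝐜" => (PresentedGroup.of 2 : PresentedGroup kbRels)
local notation "𝐝" => (PresentedGroup.of 3 : PresentedGroup kbRels)
local notation "𝐪" => (PresentedGroup.of 4 : PresentedGroup kbRels)
local notation "𝐭" => (PresentedGroup.of 5 : PresentedGroup kbRels)

theorem b_eq_a : 𝐛 = 𝐚 :=
  (mk_eq_mk_of_mul_inv_mem (by simp [kbRels])).symm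

theorem c_eq_a : 𝐜 = 𝐚 :=
  (mk_eq_mk_of_inv_mul_mem (by simp [kbRels])).symm

theorem q_mul_a_mul_q_inv : 𝐪 * 𝐚 * 𝐪⁻¹ = 𝐚 :=
  (mk_eq_mk_of_mul_inv_mem (by simp [kbRels])).trans b_eq_a

theorem d_eq_a : 𝐝 = 𝐚 := by
  have h : 𝐪 * 𝐜 * 𝐪⁻¹ = 𝐝 := mk_eq_mk_of_mul_inv_mem (by simp [kbRels])
  rw [← h, c_eq_a, q_mul_a_mul_q_inv]

theorem t_mul_a_mul_t_inv : 𝐭 * 𝐚 * 𝐭⁻¹ = 𝐚⁻¹ := by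
  have h : 𝐭 * 𝐚 * 𝐭⁻¹ * 𝐜 = 1 := one_of_mem (by simp [kbRels])
  rwa [c_eq_a, mul_eq_one_iff_eq_inv] at h

theorem q_mul_t_mul_q_inv : 𝐪 * 𝐭 * 𝐪⁻¹ = 𝐭 := by
  have h : ⁅𝐪⁻¹, 𝐭⁻¹⁆ = 1 := by
    rw [commutatorElement_def, inv_inv, inv_inv]
    exact one_of_mem (by simp [kbRels])
  rw [mul_inv_eq_iff_eq_mul]
  exact Commute.inv_inv_iff.mp (commutatorElement_eq_one_iff_commute.mp h)

def toProd : PresentedGroup kbRels →* Multiplicative ℤ × KleinBottleGroup :=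
  toGroup (f := ![(1, .a), (1, .a), (1, .a), (1, .a), (ofAdd 1, 1), (1, .t)]) fun r hr => by
    simp only [kbRels, Set.mem_insert_iff, Set.mem_singleton_iff] at hr
    rcases hr with rfl | rfl | rfl | rfl | rfl | rfl | rfl | rfl <;>
      simp [Prod.ext_iff, KleinBottleGroup.t_mul_a_mul_t_inv]

theorem commute_q_lift (k : KleinBottleGroup) :
    Commute 𝐪 (KleinBottleGroup.lift 𝐚 𝐭 t_mul_a_mul_t_inv k) := by
  have h : (MulAut.conj 𝐪).toMonoidHom.comp (KleinBottleGroup.lift 𝐚 𝐭 t_mul_a_mul_t_inv) =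
      KleinBottleGroup.lift 𝐚 𝐭 t_mul_a_mul_t_inv :=
    KleinBottleGroup.hom_ext (by simpa using q_mul_a_mul_q_inv)
      (by simpa using q_mul_t_mul_q_inv)
  exact mul_inv_eq_iff_eq_mul.mp (DFunLike.congr_fun h k)

def ofProd : Multiplicative ℤ × KleinBottleGroup →* PresentedGroup kbRels :=
  (zpowersHom _ 𝐪).noncommCoprod (KleinBottleGroup.lift 𝐚 𝐭 t_mul_a_mul_t_inv)
    fun m k => (commute_q_lift k).zpow_left m.toAdd

theorem ofProd_apply (m : Multiplicative ℤ) (k : KleinBottleGroup) :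
    ofProd (m, k) = 𝐪 ^ m.toAdd * KleinBottleGroup.lift 𝐚 𝐭 t_mul_a_mul_t_inv k :=
  MonoidHom.noncommCoprod_apply _ _ _ _

theorem ofProd_comp_toProd : ofProd.comp toProd = MonoidHom.id _ := by
  refine PresentedGroup.ext fun i => ?_
  fin_cases i <;> simp [ofProd_apply, toProd, b_eq_a, c_eq_a, d_eq_a]

theorem toProd_comp_ofProd : toProd.comp ofProd = MonoidHom.id _ := by
  refine MonoidHom.prod_ext (MonoidHom.ext_mint ?_) (KleinBottleGroup.hom_ext ?_ ?_) <;>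
    simp [ofProd_apply, toProd]

end kbRels

/-- The group
`G = ⟨a, b, c, d, q, t ∣ a q a⁻¹ = c q c⁻¹, q a q⁻¹ = b, q c q⁻¹ = d, t a t⁻¹ = c⁻¹,
t b t⁻¹ = c d⁻¹ c⁻¹, a b⁻¹ = 1, a⁻¹ c = 1, q⁻¹ t⁻¹ q t = 1⟩`
is isomorphic to `ℤ × K`, where `K` is the Klein bottle group `ℤ ⋊ ℤ`. -/
theorem stmt17 :
    Nonempty (PresentedGroup kbRels ≃* Multiplicative ℤ × KleinBottleGroup) :=
  ⟨MonoidHom.toMulEquiv kbRels.toProd kbRels.ofProd kbRels.ofProd_comp_toProd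
    kbRels.toProd_comp_ofProd⟩
end
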